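/- Let S(x,q) be a generating function on ℝ^m × (ℝ^n)^* and Φ_S^* the associated thick-morphism pull-back. Then the generating function associated with the formal functional Φ_S^* coincides with S: for every covector l ∈ (ℝ^n)^* and every k ≥ 0, the order-k component of Φ_S^*(g) evaluated at the linear function g(y) = l_a y^a equals S_k^{a_1…a_k}(x) l_{a_1} ⋯ l_{a_k}; equivalently, Φ_S^*(l_a y^a)(x) = S(x, l) as a formal sum over homogeneous orders in l. -/
import Mathlib


open scoped BigOperators

namespace ThickMorphism

/-- Real-valued functions on `ℝ^n` (the ambient space of `C^∞(ℝ^n)`). -/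
abbrev Fn (n : ℕ) : Type := (Fin n → ℝ) → ℝ

/-- `ℝ^n`-valued functions on `ℝ^m`. -/
abbrev VFn (m n : ℕ) : Type := (Fin m → ℝ) → Fin n → ℝ

/-- `f` is a smooth (`C^∞`) function on `ℝ^n`. -/
def Sm {n : ℕ} (f : Fn n) : Prop := ContDiff ℝ (⊤ : ℕ∞) f

/-- `f` is a smooth (`C^∞`) map from `ℝ^m` to `ℝ^n`. -/
def SmV {m n : ℕ} (f : VFn m n) : Prop := ContDiff ℝ (⊤ : ℕ∞) f

/-- The partial derivative `∂_b g`. -/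
noncomputable def pd {n : ℕ} (b : Fin n) (g : Fn n) : Fn n :=
  fun y => fderiv ℝ g y (Pi.single b 1)

/-- The `a`-th coordinate function `y^a` on `ℝ^n`. -/
def coordFn {n : ℕ} (a : Fin n) : Fn n := fun y => y a

/-- Ordered tuples of `j` positive parts summing to `k` (parts coded in `Fin (k+1)`). -/
def parts (j k : ℕ) : Finset (Fin j → Fin (k + 1)) :=
  Finset.univ.filter fun t => (∑ i, (t i : ℕ)) = k ∧ ∀ i, 0 < (t i : ℕ)

/-- Order-`k` component of the Taylor expansion (at `Y 0`) of `h ∘ Y`,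
where `Y r` is the order-`r` component of a formal map with values in `ℝ^n`:
`Σ_{j} Σ_{r_1+⋯+r_j = k, r_i ≥ 1} (1/j!) ∂^j h (Y 0 x) (Y_{r_1}(x),…,Y_{r_j}(x))`. -/
noncomputable def taylorComp {m n : ℕ} (h : Fn n) (Y : ℕ → VFn m n) (k : ℕ) : Fn m :=
  fun x => ∑ j ∈ Finset.range (k + 1), ∑ t ∈ parts j k,
    ((Nat.factorial j : ℝ))⁻¹ * iteratedFDeriv ℝ j h (Y 0 x) (fun i => Y (t i : ℕ) x)

/-- A formal functional from `C^∞(ℝ^n)` to `C^∞(ℝ^m)`: a sequence of symmetric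
`k`-linear maps `B k` (the polarised forms), preserving smoothness; the order-`k`
component of the functional is the diagonal restriction `g ↦ B k (g,…,g)`. -/
structure FormalFunctional (n m : ℕ) where
  B : (k : ℕ) → MultilinearMap ℝ (fun _ : Fin k => Fn n) (Fn m)
  symm : ∀ (k : ℕ) (σ : Equiv.Perm (Fin k)) (v : Fin k → Fn n), B k (v ∘ σ) = B k v
  smooth : ∀ (k : ℕ) (v : Fin k → Fn n), (∀ i, Sm (v i)) → Sm (B k v)

/-- The order-`k` component `L_k(g)` of a formal functional. -/
def FormalFunctional.ord {n m : ℕ} (L : FormalFunctional n m) (k : ℕ) (g : Fn n) : Fn m :=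
  L.B k (fun _ => g)

/-- A formal map over `C^∞(ℝ^n)` with values in `ℝ^n`-valued functions on `ℝ^m`:
a sequence of symmetric `r`-linear maps `K r`; the order-`r` component at `g`
is the diagonal restriction. -/
structure FormalMap (n m : ℕ) where
  K : (r : ℕ) → MultilinearMap ℝ (fun _ : Fin r => Fn n) (VFn m n)
  symm : ∀ (r : ℕ) (σ : Equiv.Perm (Fin r)) (v : Fin r → Fn n), K r (v ∘ σ) = K r v
  smooth : ∀ (r : ℕ) (v : Fin r → Fn n), (∀ i, Sm (v i)) → SmV (K r v)

/-- The order-`r` component `K_r(g)` of a formal map. -/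
def FormalMap.ord {n m : ℕ} (K : FormalMap n m) (r : ℕ) (g : Fn n) : VFn m n :=
  K.K r (fun _ => g)

/-- The support map `K₀` of a formal map. -/
def FormalMap.supp {n m : ℕ} (K : FormalMap n m) : VFn m n :=
  K.K 0 (fun i => i.elim0)

/-- `L` is a non-linear homomorphism with associated formal map `K`: for all smooth
`g, h` and all `k`, the order-`k`-in-`g` component of the differential of `L` at `g`
in direction `h`, namely `(k+1)·B_{k+1}(h,g,…,g)`, equals the order-`k` component
of the formal (Taylor) composition `h(K(g))`. -/
def IsNonlinearHomWith {n m : ℕ} (L : FormalFunctional n m) (K : FormalMap n m) : Prop :=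
  ∀ (g h : Fn n), Sm g → Sm h → ∀ k : ℕ,
    ((k : ℝ) + 1) • L.B (k + 1) (Fin.cons h (fun _ => g)) =
      taylorComp h (fun r => K.ord r g) k

/-- `L` is a non-linear homomorphism. -/
def IsNonlinearHom {n m : ℕ} (L : FormalFunctional n m) : Prop :=
  ∃ K : FormalMap n m, IsNonlinearHomWith L K

/-- A generating function `S(x,q) = Σ_k S_k^{a_1…a_k}(x) q_{a_1}⋯q_{a_k}` of a thick
morphism `ℝ^m ⇛ ℝ^n`: smooth symmetric tensors `S k x : (Fin k → Fin n) → ℝ`. -/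
structure GenFn (m n : ℕ) where
  S : (k : ℕ) → (Fin m → ℝ) → (Fin k → Fin n) → ℝ
  symm : ∀ (k : ℕ) (σ : Equiv.Perm (Fin k)) (x : Fin m → ℝ) (a : Fin k → Fin n),
    S k x (a ∘ σ) = S k x a
  smooth : ∀ (k : ℕ) (a : Fin k → Fin n), Sm (fun x => S k x a)

/-- The first-order coefficient `S_1` of a generating function, as a map `ℝ^m → ℝ^n`. -/
def sOne {m n : ℕ} (S : GenFn m n) : VFn m n := fun x a => S.S 1 x (fun _ => a)

/-- Order-`t`-in-`g` component (`t ≥ 1`) of `q_b = (∂_b g)(y(x,g))`, the formal map `y`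
having components `Y`: it is the Taylor-composition component of order `t-1`. -/
noncomputable def qComp {m n : ℕ} (g : Fn n) (Y : ℕ → VFn m n) (b : Fin n) (t : ℕ) : Fn m :=
  taylorComp (pd b g) Y (t - 1)

/-- Order-`N`-in-`g` component of `∂S(x,q)/∂q_a` evaluated at `q_b = (∂_b g)(y(x,g))`,
where `y` has components `Y`. -/
noncomputable def dSComp {m n : ℕ} (S : GenFn m n) (g : Fn n) (Y : ℕ → VFn m n) (N : ℕ) :
    VFn m n :=
  fun x a => ∑ j ∈ Finset.range (N + 1), ∑ b : Fin j → Fin n, ∑ t ∈ parts j N,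
    ((j : ℝ) + 1) * S.S (j + 1) x (Fin.cons a b) * ∏ i, qComp g Y (b i) (t i : ℕ) x

/-- Auxiliary recursion: `thickYAux S g k r` is the order-`r` component `y_r(x,g)` of the
formal map of the thick morphism `Φ_S` for `r ≤ k` (and `0` for `r > k`). -/
noncomputable def thickYAux {m n : ℕ} (S : GenFn m n) (g : Fn n) : ℕ → ℕ → VFn m n
  | 0 => fun r => if r = 0 then (fun x a => S.S 1 x (fun _ => a)) else 0
  | k + 1 => fun r =>
      if r = k + 1 then dSComp S g (thickYAux S g k) (k + 1) else thickYAux S g k r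

/-- The order-`k` component `y_k(x,g)` of the formal map of the thick morphism `Φ_S`:
`y_0 = S_1`, and `y_{k+1}` is the order-`(k+1)`-in-`g` component of `∂S/∂q_a` at
`q = (∂g)(y_{≤k}(x,g))`. -/
noncomputable def thickY {m n : ℕ} (S : GenFn m n) (g : Fn n) (k : ℕ) : VFn m n :=
  thickYAux S g k k

/-- Order-`k`-in-`g` component of `S(x,q)` evaluated at `q = (∂g)(y(x,g))`. -/
noncomputable def SqComp {m n : ℕ} (S : GenFn m n) (g : Fn n) (k : ℕ) : Fn m :=
  fun x => ∑ j ∈ Finset.range (k + 1), ∑ b : Fin j → Fin n, ∑ t ∈ parts j k,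
    S.S j x b * ∏ i, qComp g (thickY S g) (b i) (t i : ℕ) x

/-- Order-`k`-in-`g` component of `y^a q_a` at `y = y(x,g)`, `q = (∂g)(y(x,g))`. -/
noncomputable def yqComp {m n : ℕ} (S : GenFn m n) (g : Fn n) (k : ℕ) : Fn m :=
  fun x => ∑ a : Fin n, ∑ t ∈ Finset.Icc 1 k,
    thickY S g (k - t) x a * qComp g (thickY S g) a t x

/-- The order-`k`-in-`g` component of the thick-morphism pull-back `Φ_S^*(g)`, i.e. of
`g(y) + S(x,q) − y^a q_a` at `y = y(x,g)`, `q = (∂g)(y(x,g))`, all compositions being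
expanded by Taylor series at `y_0 = S_1(x)`. -/
noncomputable def thickPull {m n : ℕ} (S : GenFn m n) (g : Fn n) (k : ℕ) : Fn m :=
  fun x =>
    (if k = 0 then 0 else taylorComp g (thickY S g) (k - 1) x)
      + SqComp S g k x - yqComp S g k x

/-- The coordinate functions are smooth. -/
lemma coordFn_smooth {n : ℕ} (a : Fin n) : Sm (coordFn a) :=
  (ContinuousLinearMap.proj a : (Fin n → ℝ) →L[ℝ] ℝ).contDiff

/-- The generating function `S_L` associated with a formal functional `L`:
`S_k^{a_1…a_k}(x) = B_k(y^{a_1},…,y^{a_k})(x)`, the polarised forms of `L`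
evaluated on the coordinate functions of `ℝ^n`. -/
noncomputable def assocGen {n m : ℕ} (L : FormalFunctional n m) : GenFn m n where
  S := fun k x a => L.B k (fun i => coordFn (a i)) x
  symm := by
    intro k σ x a
    have h := L.symm k σ (fun i => coordFn (a i))
    exact congrFun h x
  smooth := fun k a => L.smooth k _ (fun i => coordFn_smooth (a i))

/-- Truncation of a generating function to degree `≤ k` in `q`. -/
noncomputable def truncGen {m n : ℕ} (S : GenFn m n) (k : ℕ) : GenFn m n where
  S := fun i x a => if i ≤ k then S.S i x a else 0
  symm := by
    intro i σ x a
    by_cases h : i ≤ k <;> simp [h, S.symm]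
  smooth := by
    intro i a
    by_cases h : i ≤ k
    · simpa [Sm, h] using S.smooth i a
    · simpa [Sm, h] using (contDiff_const : ContDiff ℝ (⊤ : ℕ∞) fun _ : Fin m → ℝ => (0 : ℝ))


-- AUX START
section AuxLin
variable {m n : ℕ}

noncomputable def linMap (l : Fin n → ℝ) : (Fin n → ℝ) →L[ℝ] ℝ :=
  ∑ a, l a • ContinuousLinearMap.proj a

lemma linMap_apply (l : Fin n → ℝ) (y : Fin n → ℝ) :
    linMap l y = ∑ a, l a * y a := by
  simp [linMap, ContinuousLinearMap.sum_apply]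

lemma lin_eq (l : Fin n → ℝ) :
    (fun y => ∑ a : Fin n, l a * y a) = ⇑(linMap l) := by
  funext y; rw [linMap_apply]

lemma fderiv_lin (l : Fin n → ℝ) (y : Fin n → ℝ) :
    fderiv ℝ (fun y => ∑ a : Fin n, l a * y a) y = linMap l := by
  rw [lin_eq]; exact (linMap l).fderiv

lemma linMap_single (l : Fin n → ℝ) (b : Fin n) :
    linMap l (Pi.single b 1) = l b := by
  rw [linMap_apply, Finset.sum_eq_single b]
  · simp
  · intro a _ h; simp [Pi.single_apply, h]
  · intro h; simp at h

lemma pd_lin (l : Fin n → ℝ) (b : Fin n) :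
    pd b (fun y => ∑ a : Fin n, l a * y a) = fun _ => l b := by
  funext y
  unfold pd
  rw [fderiv_lin, linMap_single]

lemma itf_lin (l : Fin n → ℝ) {j : ℕ} (hj : 2 ≤ j) (x : Fin n → ℝ)
    (v : Fin j → (Fin n → ℝ)) :
    iteratedFDeriv ℝ j (fun y => ∑ a : Fin n, l a * y a) x v = 0 := by
  obtain ⟨i, rfl⟩ : ∃ i, j = i + 1 := ⟨j - 1, by omega⟩
  rw [iteratedFDeriv_succ_apply_right]
  have h : (fun y => fderiv ℝ (fun y => ∑ a : Fin n, l a * y a) y)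
      = fun _ => linMap l := funext fun y => fderiv_lin l y
  rw [h, iteratedFDeriv_const_of_ne (by omega)]
  simp

lemma mem_parts {j k : ℕ} {t : Fin j → Fin (k + 1)} :
    t ∈ parts j k ↔ (∑ i, (t i : ℕ)) = k ∧ ∀ i, 0 < (t i : ℕ) := by
  simp [parts]

lemma parts_zero {k : ℕ} (hk : k ≠ 0) : parts 0 k = ∅ := by
  ext t
  simp only [mem_parts, Finset.notMem_empty, iff_false]
  rintro ⟨hs, -⟩
  simp at hs
  omega

lemma parts_zero_zero : parts 0 0 = Finset.univ := by
  ext t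
  simp only [mem_parts, Finset.mem_univ, iff_true]
  exact ⟨by simp, fun i => i.elim0⟩

lemma parts_self_ones {k : ℕ} {t : Fin k → Fin (k + 1)} (ht : t ∈ parts k k)
    (i : Fin k) : (t i : ℕ) = 1 := by
  obtain ⟨hs, hp⟩ := mem_parts.mp ht
  by_contra h
  have h2 : 2 ≤ (t i : ℕ) := by have := hp i; omega
  have hlt : (∑ _j : Fin k, 1) < ∑ j, (t j : ℕ) :=
    Finset.sum_lt_sum (fun j _ => hp j) ⟨i, Finset.mem_univ i, by omega⟩
  simp at hlt
  omega

lemma parts_self {k : ℕ} :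
    parts k k
      = {(fun _ => (⟨1 % (k + 1), Nat.mod_lt _ k.succ_pos⟩ : Fin (k + 1)) :
          Fin k → Fin (k + 1))} := by
  have hmod : ∀ _i : Fin k, 1 % (k + 1) = 1 := fun i =>
    Nat.mod_eq_of_lt (by have := i.pos; omega)
  ext t
  simp only [Finset.mem_singleton]
  constructor
  · intro ht
    funext i
    exact Fin.ext ((parts_self_ones ht i).trans (hmod i).symm)
  · rintro rfl
    refine mem_parts.mpr ⟨?_, fun i => by simp [hmod i]⟩
    rw [Finset.sum_congr rfl fun i _ => hmod i]
    simp

lemma sum_parts_ones {j k : ℕ} (c : ℝ) (hjk : j ≠ k) :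
    ∑ t ∈ parts j k, (if (∀ i, (t i : ℕ) = 1) then c else 0) = 0 := by
  apply Finset.sum_eq_zero
  intro t ht
  rw [if_neg]
  intro hall
  obtain ⟨hs, -⟩ := mem_parts.mp ht
  rw [Finset.sum_congr rfl fun i _ => hall i] at hs
  simp at hs
  omega

lemma taylorComp_const (c : ℝ) (Y : ℕ → VFn m n) (k : ℕ) (x : Fin m → ℝ) :
    taylorComp (fun _ => c) Y k x = if k = 0 then c else 0 := by
  unfold taylorComp
  rw [Finset.sum_eq_single 0]
  · by_cases hk : k = 0
    · subst hk
      rw [parts_zero_zero]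
      simp [iteratedFDeriv_zero_apply]
    · rw [parts_zero hk]
      simp [hk]
  · intro j _ hj
    apply Finset.sum_eq_zero
    intro t _
    rw [iteratedFDeriv_const_of_ne hj]
    simp
  · intro h; simp at h

lemma parts_one {k : ℕ} (hk : k ≠ 0) :
    parts 1 k = {(fun _ => (⟨k, Nat.lt_succ_self k⟩ : Fin (k + 1)) : Fin 1 → Fin (k + 1))} := by
  ext t
  simp only [Finset.mem_singleton, mem_parts, Fin.sum_univ_one]
  constructor
  · rintro ⟨h1, -⟩
    funext i
    have hi : i = 0 := Subsingleton.elim _ _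
    subst hi
    exact Fin.ext h1
  · rintro rfl
    exact ⟨rfl, fun i => Nat.pos_of_ne_zero hk⟩

lemma taylorComp_lin (l : Fin n → ℝ) (Y : ℕ → VFn m n) (k : ℕ) (x : Fin m → ℝ) :
    taylorComp (fun y => ∑ a : Fin n, l a * y a) Y k x = ∑ a, l a * Y k x a := by
  unfold taylorComp
  cases k with
  | zero =>
    rw [Finset.sum_range_one, parts_zero_zero]
    simp [iteratedFDeriv_zero_apply]
  | succ k' =>
    rw [Finset.sum_eq_single 1]
    · rw [parts_one (Nat.succ_ne_zero k'), Finset.sum_singleton]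
      rw [iteratedFDeriv_one_apply, fderiv_lin, linMap_apply]
      simp
    · intro j _ hj
      apply Finset.sum_eq_zero
      intro t ht
      rcases Nat.lt_or_ge j 2 with h2 | h2
      · interval_cases j
        · rw [parts_zero (Nat.succ_ne_zero k')] at ht
          simp at ht
        · exact absurd rfl hj
      · rw [itf_lin l h2]
        simp
    · intro h; simp at h

lemma qComp_lin (l : Fin n → ℝ) (Y : ℕ → VFn m n) (b : Fin n) (t : ℕ) (x : Fin m → ℝ) :
    qComp (fun y => ∑ a : Fin n, l a * y a) Y b t x = if t - 1 = 0 then l b else 0 := by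
  unfold qComp
  rw [pd_lin l b, taylorComp_const]

lemma prod_qComp {j k : ℕ} (l : Fin n → ℝ) (Y : ℕ → VFn m n) (b : Fin j → Fin n)
    {t : Fin j → Fin (k + 1)} (ht : t ∈ parts j k) (x : Fin m → ℝ) :
    ∏ i, qComp (fun y => ∑ a : Fin n, l a * y a) Y (b i) (t i : ℕ) x
      = if (∀ i, (t i : ℕ) = 1) then ∏ i, l (b i) else 0 := by
  by_cases hall : ∀ i, (t i : ℕ) = 1
  · rw [if_pos hall]
    refine Finset.prod_congr rfl fun i _ => ?_
    rw [qComp_lin, if_pos (by rw [hall i])]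
  · rw [if_neg hall]
    push_neg at hall
    obtain ⟨i, hi⟩ := hall
    apply Finset.prod_eq_zero (Finset.mem_univ i)
    rw [qComp_lin, if_neg]
    have := (mem_parts.mp ht).2 i
    omega

lemma SqComp_lin (S : GenFn m n) (l : Fin n → ℝ) (k : ℕ) (x : Fin m → ℝ) :
    SqComp S (fun y => ∑ a : Fin n, l a * y a) k x
      = ∑ b : Fin k → Fin n, S.S k x b * ∏ i, l (b i) := by
  unfold SqComp
  rw [Finset.sum_eq_single k]
  · refine Finset.sum_congr rfl fun b _ => ?_
    rw [parts_self, Finset.sum_singleton]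
    congr 1
    refine Finset.prod_congr rfl fun i _ => ?_
    rw [qComp_lin, if_pos (show 1 % (k + 1) - 1 = 0 by have := Nat.mod_le 1 (k + 1); omega)]
  · intro j _ hj
    apply Finset.sum_eq_zero
    intro b _
    have : ∀ t ∈ parts j k,
        S.S j x b * ∏ i, qComp (fun y => ∑ a : Fin n, l a * y a)
          (thickY S (fun y => ∑ a : Fin n, l a * y a)) (b i) (t i : ℕ) x
        = (if (∀ i, (t i : ℕ) = 1) then S.S j x b * ∏ i, l (b i) else 0) := by
      intro t ht
      rw [prod_qComp l _ b ht x, mul_ite, mul_zero]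
    rw [Finset.sum_congr rfl this, sum_parts_ones _ hj]
  · intro h; simp at h

lemma dSComp_lin (S : GenFn m n) (l : Fin n → ℝ) (Y : ℕ → VFn m n) (N : ℕ)
    (x : Fin m → ℝ) (a : Fin n) :
    dSComp S (fun y => ∑ a : Fin n, l a * y a) Y N x a
      = ∑ b : Fin N → Fin n, ((N : ℝ) + 1) * S.S (N + 1) x (Fin.cons a b) * ∏ i, l (b i) := by
  unfold dSComp
  rw [Finset.sum_eq_single N]
  · refine Finset.sum_congr rfl fun b _ => ?_
    rw [parts_self, Finset.sum_singleton]
    congr 1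
    refine Finset.prod_congr rfl fun i _ => ?_
    rw [qComp_lin, if_pos (show 1 % (N + 1) - 1 = 0 by have := Nat.mod_le 1 (N + 1); omega)]
  · intro j _ hj
    apply Finset.sum_eq_zero
    intro b _
    have : ∀ t ∈ parts j N,
        ((j : ℝ) + 1) * S.S (j + 1) x (Fin.cons a b)
            * ∏ i, qComp (fun y => ∑ a : Fin n, l a * y a) Y (b i) (t i : ℕ) x
        = (if (∀ i, (t i : ℕ) = 1) then
            ((j : ℝ) + 1) * S.S (j + 1) x (Fin.cons a b) * ∏ i, l (b i) else 0) := by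
      intro t ht
      rw [prod_qComp l _ b ht x, mul_ite, mul_zero]
    rw [Finset.sum_congr rfl this, sum_parts_ones _ hj]
  · intro h; simp at h

lemma thickY_lin (S : GenFn m n) (l : Fin n → ℝ) (k : ℕ) (x : Fin m → ℝ) (a : Fin n) :
    thickY S (fun y => ∑ a : Fin n, l a * y a) k x a
      = ∑ b : Fin k → Fin n, ((k : ℝ) + 1) * S.S (k + 1) x (Fin.cons a b) * ∏ i, l (b i) := by
  cases k with
  | zero =>
    show thickYAux S _ 0 0 x a = _
    rw [thickYAux]
    beta_reduce
    rw [if_pos rfl]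
    have huniv : (Finset.univ : Finset (Fin 0 → Fin n)) = {fun i => i.elim0} := by
      ext b
      simp only [Finset.mem_univ, Finset.mem_singleton, true_iff]
      exact funext fun i => i.elim0
    rw [huniv, Finset.sum_singleton]
    have hcons : (Fin.cons a (fun i : Fin 0 => i.elim0) : Fin 1 → Fin n) = fun _ => a := by
      funext i
      have hi : i = 0 := by omega
      subst hi
      rfl
    rw [hcons]
    simp
  | succ k' =>
    show thickYAux S _ (k' + 1) (k' + 1) x a = _
    rw [thickYAux]
    beta_reduce
    rw [if_pos rfl, dSComp_lin]

lemma yqComp_lin (S : GenFn m n) (l : Fin n → ℝ) {k : ℕ} (hk : k ≠ 0) (x : Fin m → ℝ) :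
    yqComp S (fun y => ∑ a : Fin n, l a * y a) k x
      = ∑ a, thickY S (fun y => ∑ a : Fin n, l a * y a) (k - 1) x a * l a := by
  unfold yqComp
  refine Finset.sum_congr rfl fun a _ => ?_
  rw [Finset.sum_eq_single 1]
  · rw [qComp_lin, if_pos rfl]
  · intro t ht htne
    rw [qComp_lin, if_neg, mul_zero]
    have := (Finset.mem_Icc.mp ht).1
    omega
  · intro h
    rw [Finset.mem_Icc] at h
    omega

lemma yqComp_lin_zero (S : GenFn m n) (l : Fin n → ℝ) (x : Fin m → ℝ) :
    yqComp S (fun y => ∑ a : Fin n, l a * y a) 0 x = 0 := by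
  unfold yqComp
  simp

end AuxLin
-- AUX END

/-- The generating function associated with the formal functional
`Φ_S^*` coincides with `S`: for every covector `l ∈ (ℝ^n)^*` and every `k ≥ 0`, the
order-`k` component of `Φ_S^*` evaluated at the linear function `g(y) = l_a y^a` equals
`S_k^{a_1…a_k}(x) l_{a_1} ⋯ l_{a_k}`; i.e. `Φ_S^*(l_a y^a)(x) = S(x,l)` as a formal sum
over homogeneous orders in `l`. -/
theorem assoc_gen_of_thickPull {m n : ℕ} (S : GenFn m n) (l : Fin n → ℝ) (k : ℕ)
    (x : Fin m → ℝ) :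
    thickPull S (fun y => ∑ a : Fin n, l a * y a) k x
      = ∑ a : Fin k → Fin n, S.S k x a * ∏ i, l (a i) := by
  by_cases hk : k = 0
  · subst hk
    unfold thickPull
    rw [if_pos rfl, SqComp_lin, yqComp_lin_zero]
    simp
  · unfold thickPull
    rw [if_neg hk, taylorComp_lin, SqComp_lin, yqComp_lin S l hk]
    have h : ∑ a, l a * thickY S (fun y => ∑ a : Fin n, l a * y a) (k - 1) x a
        = ∑ a, thickY S (fun y => ∑ a : Fin n, l a * y a) (k - 1) x a * l a :=
      Finset.sum_congr rfl fun a _ => mul_comm _ _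
    rw [h, add_sub_cancel_left]

end ThickMorphism
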